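/- arXiv:1005.1177 — 2 statements merged into one kernel-verified Lean document; each statement's English description precedes it below -/
import Mathlib

section
/- Let p be a prime and let a_1, ..., a_m be non-negative integers with a_1 + ... + a_m ≤ p - 1. Let X_1, ..., X_m be subsets of F_p such that |X_i - X_j| ≤ a_i + a_j for all i < j. Then there exist elements t_1, ..., t_m ∈ F_p such that the translated sets X_1 + t_1, ..., X_m + t_m are pairwise disjoint. -/
/-!
The translates `X i + t i` are pairwise disjoint as soon as `t j - t i - d ≠ 0` for all `i < j`
and `d ∈ X i - X j`. Padding these linear forms with copies of `t j - t i` up to `a i + a j` forms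
per pair, we look for a point where their product `F` does not vanish (Combinatorial
Nullstellensatz). Over a finite field with `q` elements, `∑ x, x ^ k` is `-1` for `k = q - 1` and
`0` for `k < q - 1`, so summing `F t * ∏ i, t i ^ (q - 1 - (A - a i))` over all `t`, where
`A = ∑ i, a i`, only sees the coefficient of `∏ i, t i ^ (A - a i)` in the top homogeneous part
`∏ i < j, (t j - t i) ^ (a i + a j)` of `F`. By Dyson's theorem this coefficient is, up to sign,
the multinomial coefficient `A! / ∏ i, (a i)!`, which is nonzero mod `p` as `A < p`.

Dyson's theorem for these sums follows by induction: if all `a i ≥ 1`,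
expanding one Vandermonde factor gives Pascal's recursion for the multinomial coefficient, and
if `a k = 0`, summing over `t k` first removes the index `k`.
-/

open Finset Polynomial
open scoped Nat Pointwise

namespace FiniteField

variable {K : Type*} [Field K] [Fintype K]

theorem sum_pow_card_sub_one : ∑ x : K, x ^ (Fintype.card K - 1) = -1 := by
  classical
  have hq : Fintype.card K - 1 ≠ 0 := by have := Fintype.one_lt_card (α := K); omega
  have h : ∀ x : K, x ^ (Fintype.card K - 1) = if x = 0 then 0 else 1 := fun x => by
    split_ifs with hx
    · rw [hx, zero_pow hq]
    · exact pow_card_sub_one_eq_one x hx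
  simp only [h, sum_ite, sum_const_zero, sum_const, zero_add, nsmul_eq_mul, mul_one]
  rw [filter_ne', card_erase_of_mem (mem_univ _), card_univ, Nat.cast_sub Fintype.card_pos,
    cast_card_eq_zero, Nat.cast_one, zero_sub]

theorem sum_eval_eq_neg_coeff {f : K[X]} (hf : f.natDegree ≤ Fintype.card K - 1) :
    ∑ x : K, f.eval x = -f.coeff (Fintype.card K - 1) := by
  simp_rw [eval_eq_sum_range' (Nat.lt_succ_of_le hf), sum_comm (s := univ), ← mul_sum,
    sum_range_succ]
  rw [sum_eq_zero fun i hi => by rw [sum_pow_lt_card_sub_one K i (mem_range.mp hi), mul_zero],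
    sum_pow_card_sub_one]
  ring

theorem sum_prod_sub_pow_mul_pow {ι : Type*} (s : Finset ι) (c : ι → K) (e : ι → ℕ)
    (he : ∑ j ∈ s, e j ≤ Fintype.card K - 1) :
    ∑ y : K, (∏ j ∈ s, (y - c j) ^ e j) * y ^ (Fintype.card K - 1 - ∑ j ∈ s, e j)
      = -1 := by
  have hprod : (∏ j ∈ s, (X - C (c j)) ^ e j).Monic :=
    monic_prod_of_monic _ _ fun j _ => (monic_X_sub_C (c j)).pow (e j)
  set f : K[X] := (∏ j ∈ s, (X - C (c j)) ^ e j) * X ^ (Fintype.card K - 1 - ∑ j ∈ s, e j)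
  have hmonic : f.Monic := hprod.mul (monic_X_pow _)
  have hdeg : f.natDegree = Fintype.card K - 1 := by
    rw [hprod.natDegree_mul (monic_X_pow _),
      natDegree_prod_of_monic _ _ fun j _ => (monic_X_sub_C (c j)).pow (e j)]
    simp only [natDegree_pow, natDegree_X_sub_C, mul_one, natDegree_X]
    omega
  have := sum_eval_eq_neg_coeff hdeg.le
  rw [← hdeg, hmonic.coeff_natDegree] at this
  simpa [f, eval_prod] using this

theorem sum_prod_pow_eq_zero {ι : Type*} [Fintype ι] [DecidableEq ι] {g : ι → ℕ}
    (hg : ∑ i, g i < Fintype.card ι * (Fintype.card K - 1)) :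
    ∑ t : ι → K, ∏ i, t i ^ g i = 0 := by
  obtain ⟨i, hi⟩ : ∃ i, g i < Fintype.card K - 1 := by
    by_contra! h
    have := sum_le_sum fun i (_ : i ∈ univ) => h i
    simp only [sum_const, card_univ, smul_eq_mul] at this
    omega
  rw [← Fintype.piFinset_univ, ← prod_univ_sum (fun _ => univ) fun i x => x ^ g i]
  exact prod_eq_zero (mem_univ i) (sum_pow_lt_card_sub_one K _ hi)

end FiniteField

theorem Finset.sum_update_sub_one {ι : Type*} [Fintype ι] [DecidableEq ι] {a : ι → ℕ}
    {k : ι} (hk : a k ≠ 0) : ∑ i, Function.update a k (a k - 1) i = ∑ i, a i - 1 := by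
  rw [sum_update_of_mem (mem_univ k), ← add_sum_erase univ a (mem_univ k),
    sdiff_singleton_eq_erase]
  omega

theorem prod_pow_add_single {ι M : Type*} [Fintype ι] [DecidableEq ι] [CommMonoid M]
    (g : ι → ℕ) (t : ι → M) (j : ι) :
    ∏ i, t i ^ (g + Pi.single j 1 : ι → ℕ) i = t j * ∏ i, t i ^ g i := by
  simp only [Pi.add_apply, pow_add, prod_mul_distrib]
  rw [mul_comm, Fintype.prod_eq_single j fun i hi => by simp [hi]]
  simp

theorem sum_add_single {ι : Type*} [Fintype ι] [DecidableEq ι] (g : ι → ℕ) (j : ι) :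
    ∑ i, (g + Pi.single j 1 : ι → ℕ) i = ∑ i, g i + 1 := by
  simp [sum_add_distrib]

theorem prod_pow_eq_prod_succAbove_mul {M : Type*} [CommMonoid M] {n : ℕ} (t : Fin (n + 1) → M)
    {g g' : Fin (n + 1) → ℕ} (k : Fin (n + 1)) (hk : g' k = g k)
    (hsucc : ∀ j, g' (k.succAbove j) = g (k.succAbove j) + 1) :
    ∏ i, t i ^ g' i = (∏ j, t (k.succAbove j)) * ∏ i, t i ^ g i := by
  simp only [Fin.prod_univ_succAbove _ k, hk, hsucc, pow_succ, prod_mul_distrib]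
  ac_rfl

theorem prod_pow_insertNth {M : Type*} [CommMonoid M] {n : ℕ} (g : Fin (n + 1) → ℕ)
    (k : Fin (n + 1)) (y : M) (s : Fin n → M) :
    ∏ i, k.insertNth y s i ^ g i = y ^ g k * ∏ j, s j ^ g (k.succAbove j) := by
  simp [Fin.prod_univ_succAbove _ k]

theorem Nat.multinomial_comp_succAbove {n : ℕ} {a : Fin (n + 1) → ℕ} {k : Fin (n + 1)}
    (hak : a k = 0) : multinomial univ (a ∘ k.succAbove) = multinomial univ a := by
  simp [multinomial, Fin.sum_univ_succAbove a k, Fin.prod_univ_succAbove (fun i => (a i)!) k, hak]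

theorem Nat.sum_multinomial_update {ι : Type*} [Fintype ι] [DecidableEq ι] [Nonempty ι]
    {a : ι → ℕ} (ha : ∀ i, a i ≠ 0) :
    ∑ k, multinomial univ (Function.update a k (a k - 1)) = multinomial univ a := by
  have hfact : ∀ k, ∏ i, (a i)! = a k * ∏ i, (Function.update a k (a k - 1) i)! := by
    intro k
    simp only [Function.apply_update (fun _ n => n !), prod_update_of_mem (mem_univ k),
      sdiff_singleton_eq_erase, ← mul_prod_erase univ (fun i => (a i)!) (mem_univ k),
      ← mul_assoc, Nat.mul_factorial_pred (ha k)]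
  have hpos : 0 < ∑ i, a i := by
    obtain ⟨k⟩ := ‹Nonempty ι›
    exact (Nat.pos_of_ne_zero (ha k)).trans_le
      (single_le_sum (fun i _ => Nat.zero_le _) (mem_univ k))
  refine Nat.eq_of_mul_eq_mul_left (prod_factorial_pos univ a) ?_
  calc (∏ i, (a i)!) * ∑ k, multinomial univ (Function.update a k (a k - 1))
      = ∑ k, a k * (∑ i, a i - 1)! := by
        rw [mul_sum]
        refine sum_congr rfl fun k _ => ?_
        rw [hfact k, mul_assoc, multinomial_spec, sum_update_sub_one (ha k)]
    _ = (∏ i, (a i)!) * multinomial univ a := by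
        rw [← sum_mul, multinomial_spec, Nat.mul_factorial_pred hpos.ne']

theorem Nat.Prime.not_dvd_multinomial {ι : Type*} {p : ℕ} (hp : p.Prime) (s : Finset ι)
    {a : ι → ℕ} (ha : ∑ i ∈ s, a i < p) : ¬p ∣ multinomial s a := fun h =>
  ha.not_ge <| (hp.dvd_factorial).mp <| h.trans <| Dvd.intro_left _ (multinomial_spec s a)

theorem Fin.sum_val_mul_update {m : ℕ} {a : Fin m → ℕ} {k : Fin m} (hk : a k ≠ 0) :
    ∑ i : Fin m, (i : ℕ) * Function.update a k (a k - 1) i + k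
      = ∑ i : Fin m, (i : ℕ) * a i := by
  have h : ∀ i : Fin m, (i : ℕ) * a i
      = (i : ℕ) * Function.update a k (a k - 1) i + if i = k then (k : ℕ) else 0 := by
    intro i
    rcases eq_or_ne i k with rfl | hi
    · rw [Function.update_self, if_pos rfl, ← Nat.mul_succ, Nat.succ_eq_add_one,
        Nat.sub_add_cancel (Nat.one_le_iff_ne_zero.mpr hk)]
    · rw [Function.update_of_ne hi, if_neg hi, add_zero]
  rw [sum_congr rfl fun i _ => h i, sum_add_distrib, sum_ite_eq']
  simp

theorem Fin.sum_val_mul_succAbove {n : ℕ} {a : Fin (n + 1) → ℕ} {k : Fin (n + 1)}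
    (hak : a k = 0) :
    ∑ i : Fin (n + 1), (i : ℕ) * a i
      = ∑ j : Fin n, (j : ℕ) * a (k.succAbove j)
        + ∑ j, if k < k.succAbove j then a (k.succAbove j) else 0 := by
  rw [Fin.sum_univ_succAbove _ k, hak, mul_zero, zero_add, ← sum_add_distrib]
  refine sum_congr rfl fun j _ => ?_
  rcases lt_or_ge j.castSucc k with h | h
  · rw [Fin.succAbove_of_castSucc_lt _ _ h, if_neg h.not_gt, add_zero, Fin.val_castSucc]
  · rw [Fin.succAbove_of_le_castSucc _ _ h, if_pos (h.trans_lt j.castSucc_lt_succ), Fin.val_succ]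
    ring

section ShiftedDifferences

variable {ι K : Type*}

def shiftedDiffProd [CommRing K] (L : Multiset ((ι × ι) × K)) (t : ι → K) : K :=
  (L.map fun e => t e.1.2 - t e.1.1 - e.2).prod

@[simp]
theorem shiftedDiffProd_zero [CommRing K] (t : ι → K) : shiftedDiffProd 0 t = 1 := rfl

@[simp]
theorem shiftedDiffProd_cons [CommRing K] (e : (ι × ι) × K) (L : Multiset ((ι × ι) × K))
    (t : ι → K) :
    shiftedDiffProd (e ::ₘ L) t = (t e.1.2 - t e.1.1 - e.2) * shiftedDiffProd L t := by
  simp [shiftedDiffProd]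

variable [Fintype ι] [DecidableEq ι] [Field K] [Fintype K]

theorem sum_shiftedDiffProd_mul_prod_pow_eq_zero (L : Multiset ((ι × ι) × K)) {g : ι → ℕ}
    (h : L.card + ∑ i, g i < Fintype.card ι * (Fintype.card K - 1)) :
    ∑ t : ι → K, shiftedDiffProd L t * ∏ i, t i ^ g i = 0 := by
  induction L using Multiset.induction_on generalizing g with
  | empty => simpa using FiniteField.sum_prod_pow_eq_zero (by simpa using h)
  | cons e L ih =>
    rw [Multiset.card_cons] at h
    have hj := ih (g := g + Pi.single e.1.2 1) (by rw [sum_add_single]; omega)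
    have hi := ih (g := g + Pi.single e.1.1 1) (by rw [sum_add_single]; omega)
    have h0 := ih (g := g) (by omega)
    simp only [prod_pow_add_single] at hj hi
    calc ∑ t : ι → K, shiftedDiffProd (e ::ₘ L) t * ∏ i, t i ^ g i
        = ∑ t : ι → K, shiftedDiffProd L t * (t e.1.2 * ∏ i, t i ^ g i)
          - ∑ t : ι → K, shiftedDiffProd L t * (t e.1.1 * ∏ i, t i ^ g i)
          - e.2 * ∑ t : ι → K, shiftedDiffProd L t * ∏ i, t i ^ g i := by
          simp only [shiftedDiffProd_cons, mul_sum, ← sum_sub_distrib]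
          exact sum_congr rfl fun t _ => by ring
      _ = 0 := by rw [hj, hi, h0]; ring

theorem sum_shiftedDiffProd_mul_prod_pow_eq_unshift (L : Multiset ((ι × ι) × K))
    {g : ι → ℕ}
    (h : L.card + ∑ i, g i ≤ Fintype.card ι * (Fintype.card K - 1)) :
    ∑ t : ι → K, shiftedDiffProd L t * ∏ i, t i ^ g i
      = ∑ t : ι → K, shiftedDiffProd (L.map fun e => (e.1, 0)) t * ∏ i, t i ^ g i := by
  suffices key : ∀ N : Multiset ((ι × ι) × K), (L + N).card + ∑ i, g i ≤
      Fintype.card ι * (Fintype.card K - 1) →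
      ∑ t : ι → K, shiftedDiffProd (L + N) t * ∏ i, t i ^ g i
        = ∑ t : ι → K, shiftedDiffProd (L.map (fun e => (e.1, 0)) + N) t * ∏ i, t i ^ g i by
    simpa using key 0 (by simpa using h)
  clear h
  induction L using Multiset.induction_on with
  | empty => simp
  | cons e L ih =>
    intro N hN
    rw [Multiset.card_add, Multiset.card_cons] at hN
    have hlow := sum_shiftedDiffProd_mul_prod_pow_eq_zero (L + N) (g := g)
      (by rw [Multiset.card_add]; omega)
    have hshift := ih ((e.1, 0) ::ₘ N) (by rw [Multiset.card_add, Multiset.card_cons]; omega)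
    simp only [Multiset.add_cons, shiftedDiffProd_cons, sub_zero] at hshift
    calc ∑ t : ι → K, shiftedDiffProd (e ::ₘ L + N) t * ∏ i, t i ^ g i
        = ∑ t : ι → K, (t e.1.2 - t e.1.1) * shiftedDiffProd (L + N) t * ∏ i, t i ^ g i
          - e.2 * ∑ t : ι → K, shiftedDiffProd (L + N) t * ∏ i, t i ^ g i := by
          simp only [Multiset.cons_add, shiftedDiffProd_cons, mul_sum, ← sum_sub_distrib]
          exact sum_congr rfl fun t _ => by ring
      _ = ∑ t : ι → K, shiftedDiffProd ((e ::ₘ L).map (fun e => (e.1, 0)) + N) t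
            * ∏ i, t i ^ g i := by
          rw [hlow, mul_zero, sub_zero, hshift]
          simp [Multiset.map_cons, Multiset.cons_add, mul_assoc]

end ShiftedDifferences

section Pairs

variable {M : Type*} [CommMonoid M]

def pairs (m : ℕ) : Finset (Fin m × Fin m) := {q | q.1 < q.2}

@[simp]
theorem mem_pairs {m : ℕ} {q : Fin m × Fin m} : q ∈ pairs m ↔ q.1 < q.2 := by
  simp [pairs]

@[to_additive]
theorem prod_pairs_eq_prod_ite {m : ℕ} (f : Fin m → Fin m → M) :
    ∏ q ∈ pairs m, f q.1 q.2 = ∏ i, ∏ j, if i < j then f i j else 1 := by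
  rw [pairs, prod_filter, Fintype.prod_prod_type]

theorem prod_pairs_eq_prod_Ioi {m : ℕ} (f : Fin m → Fin m → M) :
    ∏ q ∈ pairs m, f q.1 q.2 = ∏ i, ∏ j ∈ Ioi i, f i j := by
  simp only [prod_pairs_eq_prod_ite, ← prod_filter, filter_lt_eq_Ioi]

theorem prod_pairs_succAbove {n : ℕ} (k : Fin (n + 1)) (f : Fin (n + 1) → Fin (n + 1) → M) :
    ∏ q ∈ pairs (n + 1), f q.1 q.2
      = (∏ j, if k < k.succAbove j then f k (k.succAbove j) else f (k.succAbove j) k)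
        * ∏ q ∈ pairs n, f (k.succAbove q.1) (k.succAbove q.2) := by
  rw [prod_pairs_eq_prod_ite, prod_pairs_eq_prod_ite fun i j => f (k.succAbove i) (k.succAbove j),
    Fin.prod_univ_succAbove _ k]
  simp only [Fin.prod_univ_succAbove _ k, lt_irrefl, if_false, one_mul,
    Fin.succAbove_lt_succAbove_iff, prod_mul_distrib, ← mul_assoc]
  congr 1
  rw [← prod_mul_distrib]
  refine prod_congr rfl fun j _ => ?_
  rcases (Fin.succAbove_ne k j).lt_or_gt with h | h <;> simp [h, h.not_gt]

theorem sum_pairs_add {m : ℕ} (a : Fin m → ℕ) :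
    ∑ q ∈ pairs m, (a q.1 + a q.2) = ∑ i, (∑ j, a j - a i) := by
  have hsplit : ∀ i j : Fin m, (if i < j then a i + a j else 0)
      = (if i < j then a i else 0) + if i < j then a j else 0 := fun i j => by
    split_ifs <;> rfl
  have hrow : ∀ i, ∑ j, ((if j < i then a j else 0) + if i < j then a j else 0)
      = ∑ j, a j - a i := by
    intro i
    have : ∑ j, ((if j < i then a j else 0) + if i < j then a j else 0) + a i = ∑ j, a j := by
      rw [← Fintype.sum_ite_eq' i a, ← sum_add_distrib]
      refine sum_congr rfl fun j _ => ?_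
      rcases lt_trichotomy j i with h | rfl | h
      · simp [h, h.not_gt, h.ne]
      · simp
      · simp [h, h.not_gt, h.ne']
    omega
  rw [sum_pairs_eq_sum_ite fun i j => a i + a j]
  simp only [hsplit, sum_add_distrib]
  rw [sum_comm (f := fun i j => if i < j then a i else 0), ← sum_add_distrib]
  exact sum_congr rfl fun i _ => by rw [← hrow, ← sum_add_distrib]

theorem prod_pairs_sub_eq_sum {R : Type*} [CommRing R] {n : ℕ} (t : Fin (n + 1) → R) :
    ∏ q ∈ pairs (n + 1), (t q.2 - t q.1)
      = ∑ k : Fin (n + 1), (-1) ^ (k : ℕ) * (∏ j, t (k.succAbove j))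
          * ∏ q ∈ pairs n, (t (k.succAbove q.2) - t (k.succAbove q.1)) := by
  rw [prod_pairs_eq_prod_Ioi (fun i j => t j - t i), ← Matrix.det_vandermonde,
    Matrix.det_succ_column_zero]
  refine sum_congr rfl fun k _ => ?_
  have hminor : (Matrix.vandermonde t).submatrix k.succAbove Fin.succ
      = Matrix.of fun i j => t (k.succAbove i) * Matrix.vandermonde (t ∘ k.succAbove) i j := by
    ext i j
    simp [Matrix.vandermonde_apply, pow_succ, mul_comm]
  rw [hminor, Matrix.det_mul_column, Matrix.det_vandermonde,
    prod_pairs_eq_prod_Ioi (fun i j => t (k.succAbove j) - t (k.succAbove i))]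
  simp only [Matrix.vandermonde_apply, Fin.val_zero, pow_zero, mul_one, Function.comp_apply]
  ring

end Pairs

section Dyson

variable {K : Type*} {m n : ℕ}

def dysonProd [CommRing K] (a : Fin m → ℕ) (t : Fin m → K) : K :=
  ∏ q ∈ pairs m, (t q.2 - t q.1) ^ (a q.1 + a q.2)

theorem dysonProd_eq_sum_update [CommRing K] {a : Fin (n + 1) → ℕ} (ha : ∀ i, a i ≠ 0)
    (t : Fin (n + 1) → K) :
    dysonProd a t = ∑ k : Fin (n + 1), (-1) ^ (k : ℕ) * (∏ j, t (k.succAbove j))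
      * dysonProd (Function.update a k (a k - 1)) t := by
  have hsplit : dysonProd a t = (∏ q ∈ pairs (n + 1), (t q.2 - t q.1) ^ (a q.1 + a q.2 - 1))
      * ∏ q ∈ pairs (n + 1), (t q.2 - t q.1) := by
    rw [dysonProd, ← prod_mul_distrib]
    refine prod_congr rfl fun q _ => ?_
    rw [← pow_succ, Nat.sub_add_cancel (by have := ha q.1; omega)]
  rw [hsplit, prod_pairs_sub_eq_sum, mul_sum]
  refine sum_congr rfl fun k _ => ?_
  have hupdate : dysonProd (Function.update a k (a k - 1)) t
      = (∏ q ∈ pairs (n + 1), (t q.2 - t q.1) ^ (a q.1 + a q.2 - 1))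
        * ∏ q ∈ pairs n, (t (k.succAbove q.2) - t (k.succAbove q.1)) := by
    have hexp : ∀ q ∈ pairs (n + 1), Function.update a k (a k - 1) q.1
        + Function.update a k (a k - 1) q.2
          = a q.1 + a q.2 - 1 + if q.1 ≠ k ∧ q.2 ≠ k then 1 else 0 := by
      rintro ⟨i, j⟩ hij
      have hne : i ≠ j := (mem_pairs.mp hij).ne
      have := ha i
      have := ha j
      simp only [Function.update_apply]
      split_ifs <;> subst_vars <;> omega
    rw [dysonProd, prod_congr rfl fun q hq => by rw [hexp q hq, pow_add], prod_mul_distrib,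
      prod_pairs_succAbove k fun i j => (t j - t i) ^ if i ≠ k ∧ j ≠ k then 1 else 0]
    simp [Fin.succAbove_ne]
  rw [hupdate]
  ring

theorem dysonProd_insertNth [CommRing K] {a : Fin (n + 1) → ℕ} {k : Fin (n + 1)} (hak : a k = 0)
    (y : K) (s : Fin n → K) :
    dysonProd a (k.insertNth y s)
      = (-1) ^ (∑ j, if k < k.succAbove j then a (k.succAbove j) else 0)
        * (∏ j, (y - s j) ^ a (k.succAbove j)) * dysonProd (a ∘ k.succAbove) s := by
  have hsign : ∀ j, (if k < k.succAbove j then (s j - y) ^ a (k.succAbove j)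
      else (y - s j) ^ a (k.succAbove j))
        = (-1) ^ (if k < k.succAbove j then a (k.succAbove j) else 0)
          * (y - s j) ^ a (k.succAbove j) := by
    intro j
    split_ifs
    · rw [← neg_sub, neg_pow]
    · rw [pow_zero, one_mul]
  set t : Fin (n + 1) → K := k.insertNth y s with ht
  rw [dysonProd, prod_pairs_succAbove k fun i j => (t j - t i) ^ (a i + a j)]
  simp only [ht, Fin.insertNth_apply_same, Fin.insertNth_apply_succAbove, hak, zero_add, add_zero,
    hsign, prod_mul_distrib, prod_pow_eq_pow_sum, dysonProd, Function.comp_apply]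

def dysonWeight (K : Type*) [Fintype K] (a : Fin m → ℕ) (i : Fin m) : ℕ :=
  Fintype.card K - 1 - (∑ j, a j - a i)

theorem sum_sub_add_sum_dysonWeight [Fintype K] {a : Fin m → ℕ}
    (hA : ∑ i, a i ≤ Fintype.card K - 1) :
    ∑ i, (∑ j, a j - a i) + ∑ i, dysonWeight K a i = m * (Fintype.card K - 1) := by
  calc ∑ i, (∑ j, a j - a i) + ∑ i, dysonWeight K a i
      = ∑ _i : Fin m, (Fintype.card K - 1) := by
        rw [← sum_add_distrib]
        exact sum_congr rfl fun i _ => by unfold dysonWeight; omega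
    _ = m * (Fintype.card K - 1) := by simp

/-- For `∑ i, a i ≤ q - 1`: `(-1) ^ m` times the coefficient of `∏ i, t i ^ (∑ j, a j - a i)`
in `dysonProd a`, i.e. Dyson's constant term up to sign. -/
def dysonSum (K : Type*) [Field K] [Fintype K] (a : Fin m → ℕ) : K :=
  ∑ t : Fin m → K, dysonProd a t * ∏ i, t i ^ dysonWeight K a i

variable [Field K] [Fintype K]

theorem dysonSum_eq_sum_update {a : Fin (n + 1) → ℕ} (ha : ∀ i, a i ≠ 0)
    (hA : ∑ i, a i ≤ Fintype.card K - 1) :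
    dysonSum K a
      = ∑ k : Fin (n + 1), (-1) ^ (k : ℕ) * dysonSum K (Function.update a k (a k - 1)) := by
  have hweight : ∀ k (t : Fin (n + 1) → K),
      (∏ j, t (k.succAbove j)) * ∏ i, t i ^ dysonWeight K a i
        = ∏ i, t i ^ dysonWeight K (Function.update a k (a k - 1)) i := by
    intro k t
    have hsum := sum_update_sub_one (ha k)
    have hk := ha k
    refine (prod_pow_eq_prod_succAbove_mul t k ?_ fun j => ?_).symm
    · have := single_le_sum (fun i _ => Nat.zero_le (a i)) (mem_univ k)
      simp only [dysonWeight, hsum, Function.update_self]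
      omega
    · have hpair : a k + a (k.succAbove j) ≤ ∑ i, a i :=
        (sum_pair (Fin.succAbove_ne k j).symm).symm.le.trans (sum_le_sum_of_subset (subset_univ _))
      simp only [dysonWeight, hsum, Function.update_of_ne (Fin.succAbove_ne k j)]
      omega
  simp only [dysonSum, dysonProd_eq_sum_update ha, sum_mul, mul_sum]
  rw [sum_comm]
  refine sum_congr rfl fun k _ => sum_congr rfl fun t _ => ?_
  rw [← hweight]
  ring

theorem dysonSum_of_eq_zero {a : Fin (n + 1) → ℕ} {k : Fin (n + 1)} (hak : a k = 0)
    (hA : ∑ i, a i ≤ Fintype.card K - 1) :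
    dysonSum K a = -(-1) ^ (∑ j, if k < k.succAbove j then a (k.succAbove j) else 0)
      * dysonSum K (a ∘ k.succAbove) := by
  have hsum : ∑ i, a i = ∑ j, a (k.succAbove j) := by
    rw [Fin.sum_univ_succAbove a k, hak, zero_add]
  have hweight : ∀ j, dysonWeight K a (k.succAbove j) = dysonWeight K (a ∘ k.succAbove) j := by
    intro j
    simp only [dysonWeight, hsum, Function.comp_apply]
  have hweight_k : dysonWeight K a k = Fintype.card K - 1 - ∑ j, a (k.succAbove j) := by
    rw [dysonWeight, hak, Nat.sub_zero, hsum]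
  rw [dysonSum, ← (Fin.insertNthEquiv (fun _ => K) k).sum_comp, Fintype.sum_prod_type, sum_comm,
    dysonSum, mul_sum]
  refine sum_congr rfl fun s _ => ?_
  have hy := FiniteField.sum_prod_sub_pow_mul_pow univ s (a ∘ k.succAbove) (hsum ▸ hA)
  simp only [Function.comp_apply] at hy
  simp only [Fin.insertNthEquiv, Equiv.coe_fn_mk]
  calc ∑ y, dysonProd a (k.insertNth y s) * ∏ i, k.insertNth y s i ^ dysonWeight K a i
      = (-1) ^ (∑ j, if k < k.succAbove j then a (k.succAbove j) else 0)
          * (dysonProd (a ∘ k.succAbove) s * ∏ j, s j ^ dysonWeight K (a ∘ k.succAbove) j)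
          * ∑ y, (∏ j, (y - s j) ^ a (k.succAbove j))
            * y ^ (Fintype.card K - 1 - ∑ j, a (k.succAbove j)) := by
        rw [mul_sum]
        refine sum_congr rfl fun y _ => ?_
        rw [dysonProd_insertNth hak, prod_pow_insertNth, hweight_k]
        simp only [hweight]
        ring
    _ = _ := by rw [hy]; ring

theorem dysonSum_eq {m : ℕ} (a : Fin m → ℕ) (hA : ∑ i, a i ≤ Fintype.card K - 1) :
    dysonSum K a = (-1) ^ (m + ∑ i : Fin m, (i : ℕ) * a i) * Nat.multinomial univ a := by
  induction m with
  | zero => simp [dysonSum, dysonProd, pairs]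
  | succ n ih =>
    induction hsum : ∑ i, a i using Nat.strong_induction_on generalizing a with
    | _ A ihA =>
    by_cases hzero : ∃ k, a k = 0
    · obtain ⟨k, hak⟩ := hzero
      have hsum' : ∑ j, (a ∘ k.succAbove) j = ∑ i, a i := by
        simp [Fin.sum_univ_succAbove a k, hak]
      rw [dysonSum_of_eq_zero hak hA, ih _ (hsum'.symm ▸ hA), Nat.multinomial_comp_succAbove hak,
        Fin.sum_val_mul_succAbove hak]
      simp only [Function.comp_apply, pow_add, pow_one]
      ring
    · push Not at hzero
      rw [dysonSum_eq_sum_update hzero hA, ← Nat.sum_multinomial_update hzero, Nat.cast_sum,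
        mul_sum]
      refine sum_congr rfl fun k _ => ?_
      have hk := sum_update_sub_one (hzero k)
      have hpos := (Nat.pos_of_ne_zero (hzero k)).trans_le
        (single_le_sum (fun i _ => Nat.zero_le (a i)) (mem_univ k))
      have hS := Fin.sum_val_mul_update (hzero k)
      rw [ihA _ (by omega) _ (by omega) hk, ← mul_assoc, ← pow_add]
      congr 2
      omega

end Dyson

section Packing

variable {K : Type*} [CommRing K] [DecidableEq K] {m : ℕ}

def packingForms (a : Fin m → ℕ) (X : Fin m → Finset K) : Multiset ((Fin m × Fin m) × K) :=
  (pairs m).val.bind fun q =>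
    ((X q.1 - X q.2).val + Multiset.replicate (a q.1 + a q.2 - #(X q.1 - X q.2)) 0).map (q, ·)

variable {a : Fin m → ℕ} {X : Fin m → Finset K}

theorem card_packingForms (hX : ∀ i j, i < j → #(X i - X j) ≤ a i + a j) :
    (packingForms a X).card = ∑ q ∈ pairs m, (a q.1 + a q.2) := by
  simp only [packingForms, Multiset.card_bind, Function.comp_def, Multiset.card_map,
    Multiset.card_add, Multiset.card_replicate, card_val]
  refine (sum_eq_multiset_sum _ _).symm.trans (sum_congr rfl fun q hq => ?_)
  have := hX q.1 q.2 (mem_pairs.mp hq)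
  omega

theorem shiftedDiffProd_map_packingForms (hX : ∀ i j, i < j → #(X i - X j) ≤ a i + a j)
    (t : Fin m → K) :
    shiftedDiffProd ((packingForms a X).map fun e => (e.1, 0)) t = dysonProd a t := by
  simp only [shiftedDiffProd, packingForms, Multiset.map_bind, Multiset.prod_bind, Multiset.map_map,
    Function.comp_def, Multiset.map_const', Multiset.card_add,
    Multiset.card_replicate, card_val, dysonProd, prod_eq_multiset_prod]
  refine congrArg Multiset.prod (Multiset.map_congr rfl fun q hq => ?_)
  rw [Nat.add_sub_cancel' (hX q.1 q.2 (mem_pairs.mp hq)), Multiset.map_replicate,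
    Multiset.prod_replicate, sub_zero]

theorem disjoint_of_shiftedDiffProd_packingForms_ne_zero {t : Fin m → K}
    (ht : shiftedDiffProd (packingForms a X) t ≠ 0) {i j : Fin m} (hij : i ≠ j) :
    Disjoint ((X i).image (· + t i)) ((X j).image (· + t j)) := by
  have hform : ∀ {i j}, i < j → ∀ x ∈ X i, ∀ y ∈ X j, x + t i ≠ y + t j := by
    intro i j hij x hx y hy hxy
    refine ht (Multiset.prod_eq_zero (Multiset.mem_map.mpr ⟨((i, j), x - y), ?_, ?_⟩))
    · exact Multiset.mem_bind.mpr ⟨(i, j), mem_pairs.mpr hij, Multiset.mem_map_of_mem _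
        (Multiset.mem_add.mpr (Or.inl (sub_mem_sub hx hy)))⟩
    · linear_combination -hxy
  rw [disjoint_left]
  rintro _ hzi hzj
  obtain ⟨x, hx, rfl⟩ := mem_image.mp hzi
  obtain ⟨y, hy, hxy⟩ := mem_image.mp hzj
  rcases hij.lt_or_gt with h | h
  · exact hform h x hx y hy hxy.symm
  · exact hform h y hy x hx hxy

end Packing

/-- Packing translates in `F_p` under the condition
`|X_i - X_j| ≤ a_i + a_j` with `∑ a_i ≤ p - 1`. -/
theorem packing_translates_Fp_weights (p : ℕ) (hp : p.Prime) (m : ℕ)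
    (a : Fin m → ℕ) (ha : ∑ i, a i ≤ p - 1)
    (X : Fin m → Finset (ZMod p))
    (hX : ∀ i j : Fin m, i < j → (X i - X j).card ≤ a i + a j) :
    ∃ t : Fin m → ZMod p,
      ∀ i j, i ≠ j →
        Disjoint ((X i).image (fun x => x + t i))
          ((X j).image (fun x => x + t j)) := by
  have := Fact.mk hp
  have hA : ∑ i, a i ≤ Fintype.card (ZMod p) - 1 := by rwa [ZMod.card]
  have hdeg : (packingForms a X).card + ∑ i, dysonWeight (ZMod p) a i
      ≤ Fintype.card (Fin m) * (Fintype.card (ZMod p) - 1) := by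
    rw [card_packingForms hX, sum_pairs_add, sum_sub_add_sum_dysonWeight hA, Fintype.card_fin]
  have hsum : ∑ t, shiftedDiffProd (packingForms a X) t * ∏ i, t i ^ dysonWeight (ZMod p) a i
      = dysonSum (ZMod p) a := by
    simp only [sum_shiftedDiffProd_mul_prod_pow_eq_unshift _ hdeg,
      shiftedDiffProd_map_packingForms hX, dysonSum]
  have hne : dysonSum (ZMod p) a ≠ 0 := by
    rw [dysonSum_eq a hA]
    refine mul_ne_zero (pow_ne_zero _ (neg_ne_zero.mpr one_ne_zero)) ?_
    rw [Ne, ZMod.natCast_eq_zero_iff]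
    exact hp.not_dvd_multinomial univ (by have := hp.two_le; omega)
  obtain ⟨t, -, ht⟩ := exists_ne_zero_of_sum_ne_zero (hsum ▸ hne)
  exact ⟨t, fun i j =>
    disjoint_of_shiftedDiffProd_packingForms_ne_zero (left_ne_zero_of_mul ht)⟩
end

section
/- Let p be a prime and let X_1, ..., X_m be subsets of F_p such that Σ_{i=1}^m ⌈|X_i|^2 / 2⌉ < p. Then there exist elements t_1, ..., t_m ∈ F_p such that the translated sets X_1 + t_1, ..., X_m + t_m are pairwise disjoint. -/
/-!
Put `a i = ⌈|X i|² / 2⌉`, so that `|X i| |X j| ≤ a i + a j`, and `A = ∑ a i < p`. The polynomial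
`G = ∏_{i<j} ∏_{x ∈ X i, y ∈ X j} (t_i - t_j + x - y) · (t_i - t_j)^(a i + a j - |X i| |X j|)`
vanishes at every `t` for which two translates meet. Its top homogeneous component is
`∏_{i<j} (t_i - t_j)^(a i + a j)`, whose coefficient at `∏ t_i^(A - a i)` is, up to sign, the
multinomial coefficient `A! / ∏ (a i)!` by Dyson's constant term identity (proved by Good's
recursion, which comes from Lagrange interpolation). As `A < p` this coefficient is nonzero in
`F_p`, and every exponent `A - a i` is below `p`, so Alon's Combinatorial Nullstellensatz gives a
`t` with `G t ≠ 0`.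
-/

open MvPolynomial Finset
open scoped Nat

theorem Finset.prod_prod_erase_eq_prod_lt {ι M : Type*} [Fintype ι] [LinearOrder ι] [CommMonoid M]
    (f : ι → ι → M) :
    ∏ i, ∏ j ∈ univ.erase i, f i j = ∏ q : ι × ι with q.1 < q.2, f q.1 q.2 * f q.2 q.1 := by
  have hsplit : ∀ i, ∏ j ∈ univ.erase i, f i j =
      (∏ j, if i < j then f i j else 1) * ∏ j, if j < i then f i j else 1 := fun i => by
    rw [← prod_mul_distrib, ← prod_erase univ (a := i) (by simp)]
    refine prod_congr rfl fun j hj => ?_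
    rcases (ne_of_mem_erase hj).lt_or_gt with h | h <;> simp [h, h.not_gt]
  rw [prod_filter, Fintype.prod_prod_type, prod_congr rfl fun i _ => hsplit i, prod_mul_distrib,
    prod_comm (f := fun i j => if j < i then f i j else 1), ← prod_mul_distrib]
  refine prod_congr rfl fun i _ => ?_
  rw [← prod_mul_distrib]
  refine prod_congr rfl fun j _ => ?_
  split_ifs <;> simp

namespace MvPolynomial

variable {σ R : Type*}

section CommSemiring

variable [CommSemiring R]

theorem homogeneousComponent_add_mul {P Q : MvPolynomial σ R} {m n : ℕ}
    (hP : P.totalDegree ≤ m) (hQ : Q.totalDegree ≤ n) :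
    homogeneousComponent (m + n) (P * Q) = homogeneousComponent m P * homogeneousComponent n Q := by
  classical
  ext d
  by_cases hd : d.degree = m + n
  swap
  · rw [((homogeneousComponent_isHomogeneous m P).mul
      (homogeneousComponent_isHomogeneous n Q)).coeff_eq_zero hd, coeff_homogeneousComponent,
      if_neg hd]
  rw [coeff_homogeneousComponent, if_pos hd, coeff_mul, coeff_mul]
  refine sum_congr rfl fun ⟨d₁, d₂⟩ h => ?_
  rw [HasAntidiagonal.mem_antidiagonal] at h
  have hdeg : d₁.degree + d₂.degree = m + n := by rw [← map_add, h, hd]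
  rw [coeff_homogeneousComponent, coeff_homogeneousComponent]
  rcases lt_trichotomy d₁.degree m with h₁ | h₁ | h₁
  · rw [coeff_eq_zero_of_totalDegree_lt (f := Q) (d := d₂) (by
      change _ < d₂.degree; omega)]
    simp
  · simp [h₁, show d₂.degree = n by omega]
  · rw [coeff_eq_zero_of_totalDegree_lt (f := P) (d := d₁) (by
      change _ < d₁.degree; omega)]
    simp

theorem homogeneousComponent_prod {ι : Type*} (s : Finset ι) (P : ι → MvPolynomial σ R)
    (n : ι → ℕ) (h : ∀ i ∈ s, (P i).totalDegree ≤ n i) :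
    homogeneousComponent (∑ i ∈ s, n i) (∏ i ∈ s, P i) =
      ∏ i ∈ s, homogeneousComponent (n i) (P i) := by
  classical
  induction s using Finset.induction_on with
  | empty => simp [homogeneousComponent_zero]
  | insert j s hj ih =>
    rw [sum_insert hj, prod_insert hj, prod_insert hj,
      homogeneousComponent_add_mul (h j (mem_insert_self j s)),
      ih fun i hi => h i (mem_insert_of_mem hi)]
    refine (totalDegree_finsetProd _ _).trans (sum_le_sum fun i hi => h i (mem_insert_of_mem hi))

end CommSemiring

variable [CommRing R]

theorem coeff_add_single_mul_of_isHomogeneous {P Q : MvPolynomial σ R} {k : σ} {n : ℕ}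
    {D : σ →₀ ℕ} (hP : k ∉ P.vars) (hQ : Q.IsHomogeneous n) (hD : D k = 0) :
    coeff (D + Finsupp.single k n) (P * Q) = coeff D P * coeff (Finsupp.single k n) Q := by
  classical
  rw [coeff_mul, sum_eq_single_of_mem (D, Finsupp.single k n) (by simp)]
  rintro ⟨D₁, D₂⟩ h hne
  rw [HasAntidiagonal.mem_antidiagonal] at h
  by_contra hc
  have hP₁ : coeff D₁ P ≠ 0 := left_ne_zero_of_mul hc
  have hQ₂ : coeff D₂ Q ≠ 0 := right_ne_zero_of_mul hc
  have hD₁ : D₁ k = 0 := by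
    by_contra h₁
    exact hP ((mem_vars_iff_mem_support k).2
      ⟨D₁, mem_support_iff.2 hP₁, Finsupp.mem_support_iff.2 h₁⟩)
  have hD₂ : D₂ k = n := by simpa [hD, hD₁] using DFunLike.congr_fun h k
  obtain ⟨E, rfl⟩ := exists_add_of_le (Finsupp.single_le_iff.2 hD₂.ge)
  have hdeg : (Finsupp.single k n + E).degree = n := by
    by_contra h'
    exact hQ₂ (hQ.coeff_eq_zero h')
  have hE : E = 0 := by
    rw [map_add, Finsupp.degree_single, add_eq_left] at hdeg
    exact (Finsupp.degree_eq_zero_iff E).1 hdeg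
  subst hE
  exact hne (by simpa using h)

theorem coeff_single_eq_eval_of_isHomogeneous [DecidableEq σ] {Q : MvPolynomial σ R} {n : ℕ}
    (hQ : Q.IsHomogeneous n) (k : σ) :
    coeff (Finsupp.single k n) Q = eval (Pi.single k 1) Q := by
  rw [eval_eq, sum_eq_single (Finsupp.single k n)]
  · rw [prod_eq_one fun i hi => ?_, mul_one]
    rw [mem_singleton.1 (Finsupp.support_single_subset hi), Pi.single_eq_same, one_pow]
  · intro D hD hne
    obtain ⟨i, hi, hik⟩ : ∃ i ∈ D.support, i ≠ k := by
      by_contra! h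
      have hdeg : D.degree = n := by
        by_contra h'
        exact mem_support_iff.1 hD (hQ.coeff_eq_zero h')
      have hD' := Finsupp.support_subset_singleton.1 fun i hi => mem_singleton.2 (h i hi)
      rw [hD', Finsupp.degree_single] at hdeg
      exact hne (hD'.trans (by rw [hdeg]))
    rw [prod_eq_zero hi (by simp [hik, zero_pow (Finsupp.mem_support_iff.1 hi)]), mul_zero]
  · intro h
    rw [notMem_support_iff.1 h, zero_mul]

/-- `∑ₖ ∏_{j ≠ k} X j / (X j - X k) = 1`, with the denominators cleared. -/
theorem prod_prod_erase_X_sub_X [IsDomain R] [DecidableEq σ] {s : Finset σ} (hs : s.Nonempty) :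
    ∏ i ∈ s, ∏ j ∈ s.erase i, (X j - X i : MvPolynomial σ R) =
      ∑ k ∈ s, (∏ j ∈ s.erase k, X j) * ∏ i ∈ s.erase k, ∏ j ∈ s.erase i, (X j - X i) := by
  let toFrac := algebraMap (MvPolynomial σ R) (FractionRing (MvPolynomial σ R))
  have htoFrac : Function.Injective toFrac := IsFractionRing.injective _ _
  let v : σ → FractionRing (MvPolynomial σ R) := fun i => toFrac (X i)
  have hv : Function.Injective v := htoFrac.comp (X_injective (R := R))
  -- Lagrange interpolation of the constant `1` at the nodes `v i`, evaluated at `0`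
  have hsum : ∑ k ∈ s, ∏ j ∈ s.erase k, (v j / (v j - v k)) = 1 := by
    have := congrArg (Polynomial.eval 0) (Lagrange.sum_basis hv.injOn hs)
    rw [Polynomial.eval_finsetSum, Polynomial.eval_one] at this
    rw [← this]
    refine sum_congr rfl fun k _ => ?_
    rw [Lagrange.basis, Polynomial.eval_prod]
    refine prod_congr rfl fun j hj => ?_
    have : v k - v j ≠ 0 := sub_ne_zero.2 (hv.ne (ne_of_mem_erase hj).symm)
    rw [Lagrange.basisDivisor, Polynomial.eval_mul, Polynomial.eval_C, Polynomial.eval_sub,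
      Polynomial.eval_X, Polynomial.eval_C, ← neg_sub (v k), div_neg, zero_sub, div_eq_inv_mul,
      neg_mul_eq_mul_neg]
  apply htoFrac
  simp only [map_prod, map_sum, map_mul, map_sub]
  rw [← mul_one (∏ i ∈ s, _), ← hsum, mul_sum]
  refine sum_congr rfl fun k hk => ?_
  rw [← mul_prod_erase s _ hk, mul_right_comm, ← prod_mul_distrib]
  congr 1
  refine prod_congr rfl fun j hj => ?_
  have : v j - v k ≠ 0 := sub_ne_zero.2 (hv.ne (ne_of_mem_erase hj))
  exact mul_div_cancel₀ _ this

theorem totalDegree_add_C_le {L : MvPolynomial σ R} (hL : L.totalDegree ≤ 1) (c : R) :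
    (L + C c).totalDegree ≤ 1 :=
  (totalDegree_add _ _).trans (max_le hL (by simp))

theorem homogeneousComponent_one_add_C {L : MvPolynomial σ R} (hL : L.IsHomogeneous 1) (c : R) :
    homogeneousComponent 1 (L + C c) = L := by
  rw [map_add, homogeneousComponent_eq_self hL, homogeneousComponent_eq_zero _ _ (by simp),
    add_zero]

variable {α : Type*}

theorem totalDegree_prod_add_C_mul_pow_le {L : MvPolynomial σ R} (hL : L.IsHomogeneous 1)
    (s : Finset α) (c : α → R) (e : ℕ) :
    ((∏ z ∈ s, (L + C (c z))) * L ^ e).totalDegree ≤ #s + e := by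
  refine (totalDegree_mul _ _).trans (add_le_add ?_ ((totalDegree_pow _ _).trans ?_))
  · refine (totalDegree_finsetProd _ _).trans ?_
    simpa using sum_le_sum fun z _ => totalDegree_add_C_le hL.totalDegree_le (c z)
  · simpa using Nat.mul_le_mul_left e hL.totalDegree_le

theorem homogeneousComponent_prod_add_C_mul_pow {L : MvPolynomial σ R} (hL : L.IsHomogeneous 1)
    (s : Finset α) (c : α → R) (e : ℕ) :
    homogeneousComponent (#s + e) ((∏ z ∈ s, (L + C (c z))) * L ^ e) = L ^ (#s + e) := by
  have hprod := homogeneousComponent_prod s (fun z => L + C (c z)) (fun _ => 1)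
    fun z _ => totalDegree_add_C_le hL.totalDegree_le (c z)
  have hpow : (L ^ e).IsHomogeneous e := by simpa using hL.pow e
  rw [card_eq_sum_ones, homogeneousComponent_add_mul ((totalDegree_finsetProd _ _).trans ?_)
    hpow.totalDegree_le, hprod, homogeneousComponent_eq_self hpow]
  · simp [homogeneousComponent_one_add_C hL, pow_add]
  · exact sum_le_sum fun z _ => totalDegree_add_C_le hL.totalDegree_le (c z)

theorem isHomogeneous_X_sub_X (i j : σ) : (X i - X j : MvPolynomial σ R).IsHomogeneous 1 :=
  (isHomogeneous_X R i).sub (isHomogeneous_X R j)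

end MvPolynomial

section Dyson

variable {σ : Type*} [DecidableEq σ] (R : Type*) [CommRing R]

/-- `dysonProduct R s a = ∏_{i ≠ j} (X j - X i)^(a i)` is `∏ j, X j^(A - a j)` times Dyson's
Laurent polynomial `∏_{i ≠ j} (1 - X i / X j)^(a i)`, where `A = ∑ a i`; so its coefficient at
`dysonExponent s a` is the constant term of the latter. -/
noncomputable def dysonProduct (s : Finset σ) (a : σ → ℕ) : MvPolynomial σ R :=
  ∏ i ∈ s, ∏ j ∈ s.erase i, (X j - X i) ^ a i

noncomputable def dysonExponent (s : Finset σ) (a : σ → ℕ) : σ →₀ ℕ :=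
  ∑ j ∈ s, Finsupp.single j (∑ i ∈ s, a i - a j)

variable {R}

theorem dysonExponent_apply (s : Finset σ) (a : σ → ℕ) (j : σ) :
    dysonExponent s a j = if j ∈ s then ∑ i ∈ s, a i - a j else 0 := by
  simp only [dysonExponent, Finsupp.finsetSum_apply, Finsupp.single_apply, sum_ite_eq']

theorem dysonProduct_add (s : Finset σ) (a b : σ → ℕ) :
    dysonProduct R s (a + b) = dysonProduct R s a * dysonProduct R s b := by
  simp only [dysonProduct, Pi.add_apply, pow_add, prod_mul_distrib]

theorem dysonProduct_congr {s : Finset σ} {a b : σ → ℕ} (h : ∀ i ∈ s, a i = b i) :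
    dysonProduct R s a = dysonProduct R s b :=
  prod_congr rfl fun i hi => by rw [h i hi]

theorem dysonProduct_indicator {s u : Finset σ} (hu : u ⊆ s) :
    dysonProduct R s (fun i => if i ∈ u then 1 else 0) =
      ∏ i ∈ u, ∏ j ∈ s.erase i, (X j - X i) := by
  rw [dysonProduct, ← prod_subset hu fun i _ hi => by simp [hi]]
  exact prod_congr rfl fun i hi => by simp [hi]

theorem sum_update_sub_one {s : Finset σ} {a : σ → ℕ} {k : σ} (hk : k ∈ s) (hak : a k ≠ 0) :
    ∑ i ∈ s, Function.update a k (a k - 1) i = ∑ i ∈ s, a i - 1 := by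
  rw [sum_update_of_mem hk, sdiff_singleton_eq_erase, ← add_sum_erase s a hk]
  omega

theorem prod_factorial_eq_mul_update {s : Finset σ} {a : σ → ℕ} {k : σ} (hk : k ∈ s)
    (hak : a k ≠ 0) :
    ∏ i ∈ s, ((a i)! : R) = a k * ∏ i ∈ s, ((Function.update a k (a k - 1) i)! : R) := by
  rw [← mul_prod_erase s _ hk,
    ← mul_prod_erase s (fun i => ((Function.update a k (a k - 1) i)! : R)) hk,
    Function.update_self, ← mul_assoc, ← Nat.cast_mul, Nat.mul_factorial_pred hak]
  congr 1
  exact prod_congr rfl fun i hi => by rw [Function.update_of_ne (ne_of_mem_erase hi)]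

theorem dysonProduct_eq_sum [IsDomain R] {s : Finset σ} (hs : s.Nonempty) {a : σ → ℕ}
    (ha : ∀ i ∈ s, a i ≠ 0) :
    dysonProduct R s a =
      ∑ k ∈ s, (∏ j ∈ s.erase k, X j) * dysonProduct R s (Function.update a k (a k - 1)) := by
  have hsplit : ∀ u ⊆ s, ∀ b : σ → ℕ, (∀ i ∈ s, b i = a i - 1 + if i ∈ u then 1 else 0) →
      dysonProduct R s b = dysonProduct R s (a - 1) * ∏ i ∈ u, ∏ j ∈ s.erase i, (X j - X i) :=
    fun u hu b hb => by
      rw [← dysonProduct_indicator hu, ← dysonProduct_add]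
      exact dysonProduct_congr hb
  rw [hsplit s subset_rfl a fun i hi => by simp only [hi, if_true]; have := ha i hi; omega,
    prod_prod_erase_X_sub_X hs, mul_sum]
  refine sum_congr rfl fun k hk => ?_
  rw [hsplit (s.erase k) (erase_subset k s) (Function.update a k (a k - 1)) fun i hi => ?_]
  · ring
  · rcases eq_or_ne i k with rfl | hik
    · simp
    · rw [Function.update_of_ne hik, if_pos (mem_erase.2 ⟨hik, hi⟩)]
      have := ha i hi
      omega

theorem dysonExponent_eq_add {s : Finset σ} {a : σ → ℕ} {k : σ} (hk : k ∈ s) (hak : a k ≠ 0) :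
    dysonExponent s a =
      (∑ j ∈ s.erase k, Finsupp.single j 1) + dysonExponent s (Function.update a k (a k - 1)) := by
  ext j
  simp only [Finsupp.add_apply, dysonExponent_apply, sum_update_sub_one hk hak,
    Finsupp.finsetSum_apply, Finsupp.single_apply, sum_ite_eq', mem_erase]
  by_cases hj : j ∈ s
  · rcases eq_or_ne j k with rfl | hjk
    · have := single_le_sum (fun i _ => Nat.zero_le (a i)) hj
      rw [if_pos hj, if_pos hj, if_neg fun h => h.1 rfl, Function.update_self]
      omega
    · have := add_le_sum (fun i _ => Nat.zero_le (a i)) hj hk hjk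
      rw [if_pos hj, if_pos hj, if_pos ⟨hjk, hj⟩, Function.update_of_ne hjk]
      omega
  · simp [hj]

theorem coeff_dysonProduct_eq_sum [IsDomain R] {s : Finset σ} (hs : s.Nonempty) {a : σ → ℕ}
    (ha : ∀ i ∈ s, a i ≠ 0) :
    coeff (dysonExponent s a) (dysonProduct R s a) =
      ∑ k ∈ s, coeff (dysonExponent s (Function.update a k (a k - 1)))
        (dysonProduct R s (Function.update a k (a k - 1))) := by
  rw [dysonProduct_eq_sum hs ha, coeff_sum]
  refine sum_congr rfl fun k hk => ?_
  have hX : ∏ j ∈ s.erase k, (X j : MvPolynomial σ R) =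
      monomial (∑ j ∈ s.erase k, Finsupp.single j 1) 1 := (monomial_sum_one _ _).symm
  rw [hX, dysonExponent_eq_add hk (ha k hk), coeff_monomial_mul, one_mul]

theorem dysonProduct_eq_mul_of_eq_zero {s : Finset σ} {a : σ → ℕ} {k : σ} (hk : k ∈ s)
    (hak : a k = 0) :
    dysonProduct R s a = dysonProduct R (s.erase k) a * ∏ j ∈ s.erase k, (X k - X j) ^ a j := by
  conv_lhs => rw [dysonProduct, ← insert_erase hk]
  rw [prod_insert (notMem_erase k s), hak]
  simp only [pow_zero, prod_const_one, one_mul, dysonProduct, ← prod_mul_distrib]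
  refine prod_congr rfl fun i hi => ?_
  rw [erase_insert_of_ne (ne_of_mem_erase hi).symm,
    prod_insert fun h => notMem_erase k s (mem_of_mem_erase h), mul_comm]

theorem vars_dysonProduct_subset [Nontrivial R] (s : Finset σ) (a : σ → ℕ) :
    (dysonProduct R s a).vars ⊆ s := by
  refine (vars_prod _).trans (biUnion_subset.2 fun i hi => (vars_prod _).trans
    (biUnion_subset.2 fun j hj => (vars_pow _ _).trans ((vars_sub_subset _).trans ?_)))
  rw [vars_X, vars_X]
  exact union_subset (singleton_subset_iff.2 (mem_of_mem_erase hj)) (singleton_subset_iff.2 hi)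

theorem dysonExponent_eq_add_single_of_eq_zero {s : Finset σ} {a : σ → ℕ} {k : σ} (hk : k ∈ s)
    (hak : a k = 0) :
    dysonExponent s a = dysonExponent (s.erase k) a + Finsupp.single k (∑ j ∈ s.erase k, a j) := by
  ext j
  rw [Finsupp.add_apply, dysonExponent_apply, dysonExponent_apply, sum_erase s hak,
    Finsupp.single_apply]
  rcases eq_or_ne k j with rfl | hkj
  · simp [hk, hak]
  · simp [hkj, hkj.symm]

theorem coeff_dysonProduct_of_eq_zero [Nontrivial R] {s : Finset σ} {a : σ → ℕ} {k : σ}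
    (hk : k ∈ s) (hak : a k = 0) :
    coeff (dysonExponent s a) (dysonProduct R s a) =
      coeff (dysonExponent (s.erase k) a) (dysonProduct R (s.erase k) a) := by
  have hhom : (∏ j ∈ s.erase k, (X k - X j : MvPolynomial σ R) ^ a j).IsHomogeneous
      (∑ j ∈ s.erase k, a j) :=
    IsHomogeneous.prod _ _ _ fun j _ => by simpa using (isHomogeneous_X_sub_X k j).pow (a j)
  rw [dysonProduct_eq_mul_of_eq_zero hk hak, dysonExponent_eq_add_single_of_eq_zero hk hak,
    coeff_add_single_mul_of_isHomogeneous
      (fun h => notMem_erase k s (vars_dysonProduct_subset _ _ h)) hhom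
      (by simp [dysonExponent_apply]),
    coeff_single_eq_eval_of_isHomogeneous hhom]
  simp only [map_prod, map_pow, map_sub, eval_X]
  rw [prod_eq_one fun j hj => by rw [Pi.single_eq_of_ne (ne_of_mem_erase hj), Pi.single_eq_same,
    sub_zero, one_pow], mul_one]

/-- Dyson's constant term identity, by Good's induction on `∑ a i + #s`. -/
theorem coeff_dysonProduct_mul_prod_factorial [IsDomain R] (s : Finset σ) (a : σ → ℕ) :
    coeff (dysonExponent s a) (dysonProduct R s a) * ∏ i ∈ s, ((a i)! : R) =
      ((∑ i ∈ s, a i)! : R) := by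
  induction hn : ∑ i ∈ s, a i + #s using Nat.strong_induction_on generalizing s a with
  | _ n ih =>
  rcases s.eq_empty_or_nonempty with rfl | hs
  · simp [dysonProduct, dysonExponent]
  by_cases h0 : ∀ k ∈ s, a k ≠ 0
  swap
  · obtain ⟨k, hk, hak⟩ : ∃ k ∈ s, a k = 0 := by simpa using h0
    rw [coeff_dysonProduct_of_eq_zero hk hak, ← prod_erase s (a := k) (by simp [hak]),
      ← sum_erase s hak]
    refine ih _ ?_ _ _ rfl
    rw [← hn, sum_erase s hak, card_erase_of_mem hk]
    have := card_pos.2 hs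
    omega
  have hA : ∑ i ∈ s, a i ≠ 0 := by
    obtain ⟨k, hk⟩ := hs
    have := single_le_sum (fun i _ => Nat.zero_le (a i)) hk
    have := h0 k hk
    omega
  have hterm : ∀ k ∈ s, coeff (dysonExponent s (Function.update a k (a k - 1)))
      (dysonProduct R s (Function.update a k (a k - 1))) * ∏ i ∈ s, ((a i)! : R) =
        a k * ((∑ i ∈ s, a i - 1)! : R) := fun k hk => by
    rw [prod_factorial_eq_mul_update hk (h0 k hk), mul_left_comm,
      ih _ ?_ _ _ rfl, sum_update_sub_one hk (h0 k hk)]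
    rw [← hn, sum_update_sub_one hk (h0 k hk)]
    omega
  rw [coeff_dysonProduct_eq_sum hs h0, sum_mul, sum_congr rfl hterm, ← sum_mul, ← Nat.cast_sum,
    ← Nat.cast_mul, Nat.mul_factorial_pred hA]

end Dyson

section DysonUniv

variable {ι : Type*} [Fintype ι] [LinearOrder ι]

theorem dysonProduct_univ (R : Type*) [CommRing R] (a : ι → ℕ) :
    dysonProduct R univ a = (-1) ^ (∑ q : ι × ι with q.1 < q.2, a q.1) *
      ∏ q : ι × ι with q.1 < q.2, (X q.1 - X q.2) ^ (a q.1 + a q.2) := by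
  rw [dysonProduct, prod_prod_erase_eq_prod_lt, ← prod_pow_eq_pow_sum, ← prod_mul_distrib]
  refine prod_congr rfl fun q _ => ?_
  rw [← neg_sub (X q.1), neg_pow, pow_add]
  ring

theorem coeff_dysonExponent_prod_X_sub_X_pow_ne_zero (R : Type*) [CommRing R] [IsDomain R]
    (a : ι → ℕ) (ha : ((∑ i, a i)! : R) ≠ 0) :
    coeff (dysonExponent univ a)
      (∏ q : ι × ι with q.1 < q.2, (X q.1 - X q.2 : MvPolynomial ι R) ^ (a q.1 + a q.2)) ≠ 0 := by
  intro h
  apply ha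
  rw [← coeff_dysonProduct_mul_prod_factorial, dysonProduct_univ]
  rcases neg_one_pow_eq_or (MvPolynomial ι R) (∑ q : ι × ι with q.1 < q.2, a q.1) with h' | h' <;>
    simp [h', h]

end DysonUniv

section Collision

variable {ι K : Type*} [CommRing K]

/-- Vanishes at `t` when `S i + t i` and `S j + t j` meet; the power of `X i - X j` pads its
leading form to `(X i - X j) ^ (a i + a j)`. -/
noncomputable def collisionFactor (S : ι → Finset K) (a : ι → ℕ) (i j : ι) : MvPolynomial ι K :=
  (∏ z ∈ S i ×ˢ S j, (X i - X j + C (z.1 - z.2))) * (X i - X j) ^ (a i + a j - #(S i) * #(S j))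

variable {S : ι → Finset K} {a : ι → ℕ}

theorem eval_collisionFactor_eq_zero {t : ι → K} {i j : ι} {u v : K} (hu : u ∈ S i) (hv : v ∈ S j)
    (huv : u + t i = v + t j) : eval t (collisionFactor S a i j) = 0 := by
  rw [collisionFactor, map_mul, map_prod, prod_eq_zero (i := (u, v)) (mem_product.2 ⟨hu, hv⟩),
    zero_mul]
  simp only [map_add, map_sub, eval_X, eval_C]
  linear_combination huv

theorem totalDegree_collisionFactor_le {i j : ι} (h : #(S i) * #(S j) ≤ a i + a j) :
    (collisionFactor S a i j).totalDegree ≤ a i + a j := by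
  have := totalDegree_prod_add_C_mul_pow_le (isHomogeneous_X_sub_X (R := K) i j) (S i ×ˢ S j)
    (fun z => z.1 - z.2) (a i + a j - #(S i) * #(S j))
  rwa [card_product, Nat.add_sub_cancel' h] at this

theorem homogeneousComponent_collisionFactor {i j : ι} (h : #(S i) * #(S j) ≤ a i + a j) :
    homogeneousComponent (a i + a j) (collisionFactor S a i j) = (X i - X j) ^ (a i + a j) := by
  have := homogeneousComponent_prod_add_C_mul_pow (isHomogeneous_X_sub_X (R := K) i j)
    (S i ×ˢ S j) (fun z => z.1 - z.2) (a i + a j - #(S i) * #(S j))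
  rwa [card_product, Nat.add_sub_cancel' h] at this

variable [Fintype ι] [LinearOrder ι]

noncomputable def collisionPolynomial (S : ι → Finset K) (a : ι → ℕ) : MvPolynomial ι K :=
  ∏ q : ι × ι with q.1 < q.2, collisionFactor S a q.1 q.2

theorem disjoint_image_add_of_eval_collisionPolynomial_ne_zero [DecidableEq K] {t : ι → K}
    (ht : eval t (collisionPolynomial S a) ≠ 0) {i j : ι} (hij : i ≠ j) :
    Disjoint ((S i).image (· + t i)) ((S j).image (· + t j)) := by
  wlog hlt : i < j generalizing i j
  · exact (this hij.symm (hij.lt_or_gt.resolve_left hlt)).symm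
  rw [disjoint_left]
  rintro _ hx hx'
  obtain ⟨u, hu, rfl⟩ := mem_image.1 hx
  obtain ⟨v, hv, huv⟩ := mem_image.1 hx'
  apply ht
  rw [collisionPolynomial, map_prod]
  exact prod_eq_zero (i := (i, j)) (by simpa using hlt)
    (eval_collisionFactor_eq_zero hu hv huv.symm)

theorem totalDegree_collisionPolynomial_le (hS : ∀ i j, i ≠ j → #(S i) * #(S j) ≤ a i + a j) :
    (collisionPolynomial S a).totalDegree ≤ ∑ q : ι × ι with q.1 < q.2, (a q.1 + a q.2) :=
  (totalDegree_finsetProd _ _).trans (sum_le_sum fun _ hq =>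
    totalDegree_collisionFactor_le (hS _ _ (mem_filter.1 hq).2.ne))

theorem homogeneousComponent_collisionPolynomial
    (hS : ∀ i j, i ≠ j → #(S i) * #(S j) ≤ a i + a j) :
    homogeneousComponent (∑ q : ι × ι with q.1 < q.2, (a q.1 + a q.2)) (collisionPolynomial S a) =
      ∏ q : ι × ι with q.1 < q.2, (X q.1 - X q.2) ^ (a q.1 + a q.2) := by
  rw [collisionPolynomial, homogeneousComponent_prod _ _ _ fun _ hq =>
    totalDegree_collisionFactor_le (hS _ _ (mem_filter.1 hq).2.ne)]
  exact prod_congr rfl fun q hq =>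
    homogeneousComponent_collisionFactor (hS _ _ (mem_filter.1 hq).2.ne)

end Collision

theorem exists_disjoint_image_add {ι K : Type*} [Fintype ι] [Field K] [Fintype K] [DecidableEq K]
    (S : ι → Finset K) (a : ι → ℕ) (hS : ∀ i j, i ≠ j → #(S i) * #(S j) ≤ a i + a j)
    (hfact : ((∑ i, a i)! : K) ≠ 0) (hcard : ∑ i, a i < Fintype.card K) :
    ∃ t : ι → K, ∀ i j, i ≠ j → Disjoint ((S i).image (· + t i)) ((S j).image (· + t j)) := by
  let : LinearOrder ι := LinearOrder.lift' _ (Fintype.equivFin ι).injective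
  have hT := coeff_dysonExponent_prod_X_sub_X_pow_ne_zero K a hfact
  have hd : (dysonExponent univ a).degree = ∑ q : ι × ι with q.1 < q.2, (a q.1 + a q.2) :=
    not_ne_iff.1 (mt (IsHomogeneous.prod _ _ _ fun q _ =>
      by simpa using (isHomogeneous_X_sub_X q.1 q.2).pow _).coeff_eq_zero hT)
  have hG : coeff (dysonExponent univ a) (collisionPolynomial S a) ≠ 0 := by
    have := coeff_homogeneousComponent (∑ q : ι × ι with q.1 < q.2, (a q.1 + a q.2))
      (collisionPolynomial S a) (dysonExponent univ a)
    rw [if_pos hd, homogeneousComponent_collisionPolynomial hS] at this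
    exact this ▸ hT
  obtain ⟨t, -, ht⟩ := combinatorial_nullstellensatz_exists_eval_nonzero _ _ hG
    (le_antisymm ((totalDegree_collisionPolynomial_le hS).trans hd.ge)
      (le_totalDegree (mem_support_iff.2 hG))) (fun _ => univ) fun i => by
        rw [dysonExponent_apply, if_pos (mem_univ i), Finset.card_univ]
        omega
  exact ⟨t, fun i j hij => disjoint_image_add_of_eval_collisionPolynomial_ne_zero ht hij⟩

theorem mul_le_ceil_sq_div_two_add {α : Type*} [Field α] [LinearOrder α] [IsStrictOrderedRing α]
    [FloorSemiring α] (m n : ℕ) : m * n ≤ ⌈(m : α) ^ 2 / 2⌉₊ + ⌈(n : α) ^ 2 / 2⌉₊ := by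
  have := two_mul_le_add_sq (m : α) n
  have := Nat.le_ceil ((m : α) ^ 2 / 2)
  have := Nat.le_ceil ((n : α) ^ 2 / 2)
  have h : ((m * n : ℕ) : α) ≤ ((⌈(m : α) ^ 2 / 2⌉₊ + ⌈(n : α) ^ 2 / 2⌉₊ : ℕ) : α) := by
    push_cast
    linarith
  exact_mod_cast h

/-- Packing translates in `F_p` under the condition
`∑ ⌈|X_i|²/2⌉ < p`. -/
theorem packing_translates_Fp_squares (p : ℕ) (hp : p.Prime) (m : ℕ)
    (X : Fin m → Finset (ZMod p))
    (hX : (∑ i, ⌈(((X i).card : ℚ) ^ 2) / 2⌉) < (p : ℤ)) :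
    ∃ t : Fin m → ZMod p,
      ∀ i j, i ≠ j →
        Disjoint ((X i).image (fun x => x + t i))
          ((X j).image (fun x => x + t j)) := by
  have := Fact.mk hp
  have hA : ∑ i, ⌈((X i).card : ℚ) ^ 2 / 2⌉₊ < p := by
    rw [← sum_congr rfl fun i _ => Int.natCast_ceil_eq_ceil (by positivity)] at hX
    exact_mod_cast hX
  refine exists_disjoint_image_add X _ (fun i j _ => mul_le_ceil_sq_div_two_add _ _) ?_
    (by rwa [ZMod.card])
  rw [Ne, ZMod.natCast_eq_zero_iff, hp.dvd_factorial]
  omega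
end
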